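/- arXiv:1507.07984 — 5 statements merged into one kernel-verified Lean document; each statement's English description precedes it below -/
import Mathlib

section
/- Let v* be the optimal value function of a finite discounted MDP and g*(s,a) = Q*(s,a) − v*(s) where Q*(s,a) = r(s,a) + β ∑_{s'} p(s'|s,a) v*(s'). Then a randomized policy π* is optimal (i.e., its value function equals v*) if and only if π*(s,a) · g*(s,a) = 0 for all states s and actions a. -/
/-- Uniqueness of the policy value function (contraction argument). -/
lemma policy_value_unique {S A : Type} [Fintype S] [Fintype A]
    (β : ℝ) (hβ0 : 0 ≤ β) (hβ1 : β < 1)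
    (r : S → A → ℝ) (p : S → A → S → ℝ)
    (hp0 : ∀ s a s', 0 ≤ p s a s') (hp1 : ∀ s a, ∑ s', p s a s' = 1)
    (π : S → A → ℝ)
    (hπ0 : ∀ s a, 0 ≤ π s a) (hπ1 : ∀ s, ∑ a, π s a = 1)
    (u w : S → ℝ)
    (hu : ∀ s, u s = ∑ a, π s a * (r s a + β * ∑ s', p s a s' * u s'))
    (hw : ∀ s, w s = ∑ a, π s a * (r s a + β * ∑ s', p s a s' * w s')) :
    u = w := by
  cases isEmpty_or_nonempty S with
  | inl h => funext s; exact h.elim s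
  | inr h =>
    have hne : (Finset.univ : Finset S).Nonempty := Finset.univ_nonempty
    set M := Finset.univ.sup' hne (fun s => |u s - w s|) with hM
    have hM0 : 0 ≤ M := by
      obtain ⟨s⟩ := h
      refine le_trans (abs_nonneg (u s - w s)) ?_
      rw [hM]
      exact Finset.le_sup' (fun s => |u s - w s|) (Finset.mem_univ s)
    have hMle : ∀ s, |u s - w s| ≤ M := by
      intro s; rw [hM]
      exact Finset.le_sup' (fun s => |u s - w s|) (Finset.mem_univ s)
    have key : ∀ s, |u s - w s| ≤ β * M := by
      intro s
      have hd : u s - w s = ∑ a, π s a * (β * ∑ s', p s a s' * (u s' - w s')) := by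
        rw [hu s, hw s, ← Finset.sum_sub_distrib]
        apply Finset.sum_congr rfl
        intro a _
        have hx : ∑ s', p s a s' * (u s' - w s')
            = (∑ s', p s a s' * u s') - ∑ s', p s a s' * w s' := by
          rw [← Finset.sum_sub_distrib]
          apply Finset.sum_congr rfl
          intro s' _; ring
        rw [hx]; ring
      rw [hd]
      calc |∑ a, π s a * (β * ∑ s', p s a s' * (u s' - w s'))|
          ≤ ∑ a, |π s a * (β * ∑ s', p s a s' * (u s' - w s'))| :=
            Finset.abs_sum_le_sum_abs _ _
        _ ≤ ∑ a, π s a * (β * M) := by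
            apply Finset.sum_le_sum
            intro a _
            rw [abs_mul, abs_mul, abs_of_nonneg (hπ0 s a), abs_of_nonneg hβ0]
            apply mul_le_mul_of_nonneg_left _ (hπ0 s a)
            apply mul_le_mul_of_nonneg_left _ hβ0
            calc |∑ s', p s a s' * (u s' - w s')|
                ≤ ∑ s', |p s a s' * (u s' - w s')| := Finset.abs_sum_le_sum_abs _ _
              _ ≤ ∑ s', p s a s' * M := by
                  apply Finset.sum_le_sum
                  intro s' _
                  rw [abs_mul, abs_of_nonneg (hp0 s a s')]
                  exact mul_le_mul_of_nonneg_left (hMle s') (hp0 s a s')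
              _ = M := by rw [← Finset.sum_mul, hp1, one_mul]
        _ = β * M := by rw [← Finset.sum_mul, hπ1, one_mul]
    obtain ⟨s₀, _, hs₀⟩ := Finset.exists_mem_eq_sup' hne (fun s => |u s - w s|)
    have hMeq : M = |u s₀ - w s₀| := hs₀
    have hMβ : M ≤ β * M := by rw [hMeq]; exact hMeq ▸ key s₀
    have hMzero : M = 0 := by nlinarith
    funext s
    have := key s
    rw [hMzero, mul_zero] at this
    have := abs_nonneg (u s - w s)
    have habs : |u s - w s| = 0 := le_antisymm (by linarith) (abs_nonneg _)
    have := abs_eq_zero.mp habs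
    linarith

/-- Theorem 1(ii): a randomized policy `π` is optimal (its value function
equals `v*`) iff `π(s,a) · g*(s,a) = 0` for all `s, a`. -/
theorem stmt_1 {S A : Type} [Fintype S] [Fintype A] [Nonempty A]
    (β : ℝ) (hβ0 : 0 < β) (hβ1 : β < 1)
    (r : S → A → ℝ) (p : S → A → S → ℝ)
    (hp0 : ∀ s a s', 0 ≤ p s a s') (hp1 : ∀ s a, ∑ s', p s a s' = 1)
    (π : S → A → ℝ)
    (hπ0 : ∀ s a, 0 ≤ π s a) (hπ1 : ∀ s, ∑ a, π s a = 1)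
    (vstar vpi : S → ℝ)
    (hstar : ∀ s, vstar s =
      Finset.univ.sup' Finset.univ_nonempty
        (fun a => r s a + β * ∑ s', p s a s' * vstar s'))
    (hpi : ∀ s, vpi s =
      ∑ a, π s a * (r s a + β * ∑ s', p s a s' * vpi s')) :
    vpi = vstar ↔
      ∀ s a, π s a * ((r s a + β * ∑ s', p s a s' * vstar s') - vstar s) = 0 := by
  have hQle : ∀ s a, r s a + β * ∑ s', p s a s' * vstar s' ≤ vstar s := by
    intro s a
    rw [hstar s]
    exact Finset.le_sup' (fun a => r s a + β * ∑ s', p s a s' * vstar s')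
      (Finset.mem_univ a)
  have hsumvs : ∀ s, ∑ a, π s a * vstar s = vstar s := by
    intro s; rw [← Finset.sum_mul, hπ1, one_mul]
  constructor
  · intro heq s a
    have hfix : vstar s = ∑ a, π s a * (r s a + β * ∑ s', p s a s' * vstar s') := by
      have := hpi s; rw [heq] at this; exact this
    have hsum : ∑ a, π s a * (vstar s - (r s a + β * ∑ s', p s a s' * vstar s')) = 0 := by
      have hsplit : ∑ a, π s a * (vstar s - (r s a + β * ∑ s', p s a s' * vstar s'))
          = (∑ a, π s a * vstar s)
            - ∑ a, π s a * (r s a + β * ∑ s', p s a s' * vstar s') := by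
        rw [← Finset.sum_sub_distrib]
        apply Finset.sum_congr rfl
        intro a _; ring
      rw [hsplit, hsumvs s, ← hfix, sub_self]
    have hterm : π s a * (vstar s - (r s a + β * ∑ s', p s a s' * vstar s')) = 0 := by
      have hnn : ∀ a ∈ Finset.univ,
          0 ≤ π s a * (vstar s - (r s a + β * ∑ s', p s a s' * vstar s')) := by
        intro a _
        exact mul_nonneg (hπ0 s a) (by linarith [hQle s a])
      exact (Finset.sum_eq_zero_iff_of_nonneg hnn).mp hsum a (Finset.mem_univ a)
    linarith [hterm, mul_sub (π s a) (vstar s) (r s a + β * ∑ s', p s a s' * vstar s'),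
      mul_sub (π s a) (r s a + β * ∑ s', p s a s' * vstar s') (vstar s)]
  · intro hg
    have hv : ∀ s, vstar s = ∑ a, π s a * (r s a + β * ∑ s', p s a s' * vstar s') := by
      intro s
      have h2 : ∑ a, (π s a * (r s a + β * ∑ s', p s a s' * vstar s')
          - π s a * vstar s) = 0 :=
        Finset.sum_eq_zero (fun a _ => by
          have := hg s a; rw [mul_sub] at this; exact this)
      rw [Finset.sum_sub_distrib, hsumvs s] at h2
      linarith
    exact policy_value_unique β hβ0.le hβ1 r p hp0 hp1 π hπ0 hπ1 vpi vstar hpi hv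
end

section
/- Let π be a randomized policy with value function v^π and g^π(s,a) = r(s,a) + β ∑_{s'} p(s'|s,a) v^π(s') − v^π(s). Suppose for every s,a: if π(s,a) > 0 then g^π(s,a) = 0, and if π(s,a) = 0 then g^π(s,a) ≤ 0. Then v^π satisfies the Bellman optimality equation v^π(s) = max_a [r(s,a) + β ∑_{s'} p(s'|s,a) v^π(s')] for every s, so π is globally optimal. -/
/-- Lemma 3 (global optimality): if for every `s, a` we have
`π(s,a) > 0 → g^π(s,a) = 0` and `π(s,a) = 0 → g^π(s,a) ≤ 0`, then `v^π`
satisfies the Bellman optimality equation. -/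
theorem stmt_7 {S A : Type} [Fintype S] [Fintype A] [Nonempty A]
    (β : ℝ) (hβ0 : 0 < β) (hβ1 : β < 1)
    (r : S → A → ℝ) (p : S → A → S → ℝ)
    (hp0 : ∀ s a s', 0 ≤ p s a s') (hp1 : ∀ s a, ∑ s', p s a s' = 1)
    (π : S → A → ℝ)
    (hπ0 : ∀ s a, 0 ≤ π s a) (hπ1 : ∀ s, ∑ a, π s a = 1)
    (vpi : S → ℝ) (g : S → A → ℝ)
    (hg : ∀ s a, g s a = r s a + β * (∑ s', p s a s' * vpi s') - vpi s)
    (hfix : ∀ s, ∑ a, π s a * g s a = 0)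
    (hpos : ∀ s a, 0 < π s a → g s a = 0)
    (hzero : ∀ s a, π s a = 0 → g s a ≤ 0) :
    ∀ s, vpi s = Finset.univ.sup' Finset.univ_nonempty
      (fun a => r s a + β * ∑ s', p s a s' * vpi s') := by
  intro s
  have hgle : ∀ a, g s a ≤ 0 := by
    intro a
    rcases lt_or_eq_of_le (hπ0 s a) with h | h
    · exact le_of_eq (hpos s a h)
    · exact hzero s a h.symm
  have hex : ∃ a, 0 < π s a := by
    by_contra h
    push_neg at h
    have : ∀ a ∈ Finset.univ, π s a = 0 := fun a _ => le_antisymm (h a) (hπ0 s a)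
    have := Finset.sum_eq_zero this
    rw [hπ1 s] at this
    norm_num at this
  obtain ⟨a0, ha0⟩ := hex
  apply le_antisymm
  · refine Finset.le_sup'_of_le _ (Finset.mem_univ a0) ?_
    have := hpos s a0 ha0
    rw [hg] at this
    linarith
  · refine Finset.sup'_le _ _ (fun a _ => ?_)
    have := hgle a
    rw [hg] at this
    linarith
end

section
/- If (v,π) is feasible for the optimization problem, i.e., π(s,·) is a probability distribution and Q(s,a) := r(s,a) + β ∑_{s'} p(s'|s,a) v(s') ≤ v(s) for all s,a, and additionally J(v,π) = ∑_s [v(s) − ∑_a π(s,a) Q(s,a)] = 0, then v = v^π (v is the value function of π) and v(s) ≥ Q(s,a) for all a, so v satisfies v(s) = max_a Q(s,a) at every state where some action a attains π(s,a) > 0 with g(s,a)=0; in particular v is the optimal value function v*. -/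
/-- If `(v, π)` is feasible and `J(v, π) = 0`, then `v` is the value
function of `π` and `v` satisfies the Bellman optimality equation, i.e.
`v` is the optimal value function. -/
theorem stmt_11 {S A : Type} [Fintype S] [Fintype A] [Nonempty A]
    (β : ℝ) (hβ0 : 0 < β) (hβ1 : β < 1)
    (r : S → A → ℝ) (p : S → A → S → ℝ)
    (hp0 : ∀ s a s', 0 ≤ p s a s') (hp1 : ∀ s a, ∑ s', p s a s' = 1)
    (v : S → ℝ) (π : S → A → ℝ)
    (hπ0 : ∀ s a, 0 ≤ π s a) (hπ1 : ∀ s, ∑ a, π s a = 1)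
    (Q : S → A → ℝ)
    (hQ : ∀ s a, Q s a = r s a + β * ∑ s', p s a s' * v s')
    (hfeas : ∀ s a, Q s a ≤ v s)
    (hJ : ∑ s, (v s - ∑ a, π s a * Q s a) = 0) :
    (∀ s, v s = ∑ a, π s a * Q s a) ∧
    (∀ s a, Q s a ≤ v s) ∧
    (∀ s, v s = Finset.univ.sup' Finset.univ_nonempty (Q s)) := by
  have hnn : ∀ s ∈ (Finset.univ : Finset S), 0 ≤ v s - ∑ a, π s a * Q s a := by
    intro s _
    have h1 : ∑ a, π s a * Q s a ≤ ∑ a, π s a * v s :=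
      Finset.sum_le_sum fun a _ => mul_le_mul_of_nonneg_left (hfeas s a) (hπ0 s a)
    have h2 : ∑ a, π s a * v s = v s := by
      rw [← Finset.sum_mul, hπ1 s, one_mul]
    linarith
  have hzero : ∀ s, v s = ∑ a, π s a * Q s a := by
    intro s
    have := (Finset.sum_eq_zero_iff_of_nonneg hnn).mp hJ s (Finset.mem_univ s)
    linarith
  refine ⟨hzero, hfeas, fun s => le_antisymm ?_ ?_⟩
  · calc v s = ∑ a, π s a * Q s a := hzero s
      _ ≤ ∑ a, π s a * Finset.univ.sup' Finset.univ_nonempty (Q s) :=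
          Finset.sum_le_sum fun a _ => mul_le_mul_of_nonneg_left
            (Finset.le_sup' (Q s) (Finset.mem_univ a)) (hπ0 s a)
      _ = Finset.univ.sup' Finset.univ_nonempty (Q s) := by
          rw [← Finset.sum_mul, hπ1 s, one_mul]
  · exact Finset.sup'_le _ _ fun a _ => hfeas s a
end

section
/- Let v* be the fixed point of the Bellman optimality operator and v^π the value function of a randomized policy π. Then v^π(s) ≤ v*(s) for all states s; i.e., v* dominates the value function of every randomized policy. -/
/-- The optimal value function dominates the value function of every
randomized policy: `v^π(s) ≤ v*(s)` for all `s`. -/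
theorem stmt_13 {S A : Type} [Fintype S] [Fintype A] [Nonempty A]
    (β : ℝ) (hβ0 : 0 < β) (hβ1 : β < 1)
    (r : S → A → ℝ) (p : S → A → S → ℝ)
    (hp0 : ∀ s a s', 0 ≤ p s a s') (hp1 : ∀ s a, ∑ s', p s a s' = 1)
    (π : S → A → ℝ)
    (hπ0 : ∀ s a, 0 ≤ π s a) (hπ1 : ∀ s, ∑ a, π s a = 1)
    (vstar vpi : S → ℝ)
    (hstar : ∀ s, vstar s = Finset.univ.sup' Finset.univ_nonempty
      (fun a => r s a + β * ∑ s', p s a s' * vstar s'))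
    (hpi : ∀ s, vpi s =
      ∑ a, π s a * (r s a + β * ∑ s', p s a s' * vpi s')) :
    ∀ s, vpi s ≤ vstar s := by
  intro s
  haveI : Nonempty S := ⟨s⟩
  obtain ⟨s0, -, hs0⟩ := Finset.exists_max_image (Finset.univ : Finset S)
    (fun t => vpi t - vstar t) Finset.univ_nonempty
  have hgmax : ∀ t, vpi t - vstar t ≤ vpi s0 - vstar s0 :=
    fun t => hs0 t (Finset.mem_univ t)
  -- key bound: for each action a, the policy-evaluated action value is ≤ vstar s0 + β * (vpi s0 - vstar s0)
  have key : ∀ a : A, r s0 a + β * ∑ s', p s0 a s' * vpi s'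
      ≤ vstar s0 + β * (vpi s0 - vstar s0) := by
    intro a
    have h1 : r s0 a + β * ∑ s', p s0 a s' * vstar s' ≤ vstar s0 := by
      rw [hstar s0]
      exact Finset.le_sup' (fun a => r s0 a + β * ∑ s', p s0 a s' * vstar s')
        (Finset.mem_univ a)
    have h2 : ∑ s', p s0 a s' * vpi s'
        ≤ (∑ s', p s0 a s' * vstar s') + (vpi s0 - vstar s0) := by
      have : ∑ s', p s0 a s' * vpi s'
          ≤ ∑ s', (p s0 a s' * vstar s' + p s0 a s' * (vpi s0 - vstar s0)) := by
        apply Finset.sum_le_sum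
        intro t _
        have := mul_le_mul_of_nonneg_left (hgmax t) (hp0 s0 a t)
        nlinarith [this]
      calc ∑ s', p s0 a s' * vpi s'
          ≤ ∑ s', (p s0 a s' * vstar s' + p s0 a s' * (vpi s0 - vstar s0)) := this
        _ = (∑ s', p s0 a s' * vstar s') + (∑ s', p s0 a s') * (vpi s0 - vstar s0) := by
            rw [Finset.sum_add_distrib, Finset.sum_mul]
        _ = (∑ s', p s0 a s' * vstar s') + (vpi s0 - vstar s0) := by rw [hp1 s0 a, one_mul]
    nlinarith [mul_le_mul_of_nonneg_left h2 (le_of_lt hβ0)]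
  -- combine with policy weights
  have hvpi : vpi s0 ≤ vstar s0 + β * (vpi s0 - vstar s0) := by
    conv_lhs => rw [hpi s0]
    calc ∑ a, π s0 a * (r s0 a + β * ∑ s', p s0 a s' * vpi s')
        ≤ ∑ a, π s0 a * (vstar s0 + β * (vpi s0 - vstar s0)) := by
          apply Finset.sum_le_sum
          intro a _
          exact mul_le_mul_of_nonneg_left (key a) (hπ0 s0 a)
      _ = (∑ a, π s0 a) * (vstar s0 + β * (vpi s0 - vstar s0)) := by rw [Finset.sum_mul]
      _ = vstar s0 + β * (vpi s0 - vstar s0) := by rw [hπ1 s0, one_mul]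
  have := hgmax s
  nlinarith
end

section
/- If √(π(s,a)) g^π(s,a) = 0 for all s,a for a randomized policy π (π ∈ K), and additionally g^π(s,a) ≤ 0 whenever π(s,a) = 0, then v^π = v* and π is an optimal policy. -/
/-- If `π ∈ K` (i.e. `√(π(s,a)) g^π(s,a) = 0` everywhere) and moreover
`g^π(s,a) ≤ 0` whenever `π(s,a) = 0`, then `v^π = v*`, i.e. `π` is optimal. -/
theorem stmt_14 {S A : Type} [Fintype S] [Fintype A] [Nonempty A]
    (β : ℝ) (hβ0 : 0 < β) (hβ1 : β < 1)
    (r : S → A → ℝ) (p : S → A → S → ℝ)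
    (hp0 : ∀ s a s', 0 ≤ p s a s') (hp1 : ∀ s a, ∑ s', p s a s' = 1)
    (π : S → A → ℝ)
    (hπ0 : ∀ s a, 0 ≤ π s a) (hπ1 : ∀ s, ∑ a, π s a = 1)
    (vstar vpi : S → ℝ)
    (hstar : ∀ s, vstar s = Finset.univ.sup' Finset.univ_nonempty
      (fun a => r s a + β * ∑ s', p s a s' * vstar s'))
    (hpi : ∀ s, vpi s =
      ∑ a, π s a * (r s a + β * ∑ s', p s a s' * vpi s'))
    (g : S → A → ℝ)
    (hg : ∀ s a, g s a = r s a + β * (∑ s', p s a s' * vpi s') - vpi s)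
    (hK : ∀ s a, Real.sqrt (π s a) * g s a = 0)
    (hzero : ∀ s a, π s a = 0 → g s a ≤ 0) :
    vpi = vstar := by
  have hgle : ∀ s a, g s a ≤ 0 := by
    intro s a
    by_cases h : π s a = 0
    · exact hzero s a h
    · have hpos : 0 < π s a := lt_of_le_of_ne (hπ0 s a) (Ne.symm h)
      have hs : Real.sqrt (π s a) ≠ 0 := by positivity
      rcases mul_eq_zero.mp (hK s a) with h' | h'
      · exact absurd h' hs
      · exact le_of_eq h'
  have hfix : ∀ s, vpi s = Finset.univ.sup' Finset.univ_nonempty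
      (fun a => r s a + β * ∑ s', p s a s' * vpi s') := by
    intro s
    have hex : ∃ a, 0 < π s a := by
      by_contra hc
      push_neg at hc
      have hz : ∀ a, π s a = 0 := fun a => le_antisymm (hc a) (hπ0 s a)
      have h1 := hπ1 s
      simp [hz] at h1
    obtain ⟨a0, ha0⟩ := hex
    have hga0 : g s a0 = 0 := by
      have hs : Real.sqrt (π s a0) ≠ 0 := by positivity
      rcases mul_eq_zero.mp (hK s a0) with h' | h'
      · exact absurd h' hs
      · exact h'
    apply le_antisymm
    · have heq : vpi s = r s a0 + β * ∑ s', p s a0 s' * vpi s' := by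
        have := hg s a0; linarith
      calc vpi s = r s a0 + β * ∑ s', p s a0 s' * vpi s' := heq
        _ ≤ _ := Finset.le_sup' (fun a => r s a + β * ∑ s', p s a s' * vpi s')
              (Finset.mem_univ a0)
    · apply Finset.sup'_le
      intro a _
      have h1 := hg s a
      have h2 := hgle s a
      linarith
  rcases isEmpty_or_nonempty S with hS | hS
  · funext s; exact hS.elim s
  · set M := Finset.univ.sup' Finset.univ_nonempty (fun s => |vpi s - vstar s|) with hMdef
    have hMle : ∀ s, |vpi s - vstar s| ≤ M :=
      fun s => Finset.le_sup' (fun s => |vpi s - vstar s|) (Finset.mem_univ s)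
    have hM0 : 0 ≤ M := le_trans (abs_nonneg _) (hMle (Classical.arbitrary S))
    have hsum : ∀ s a, |(∑ s', p s a s' * vpi s') - ∑ s', p s a s' * vstar s'| ≤ M := by
      intro s a
      rw [← Finset.sum_sub_distrib]
      calc |∑ s', (p s a s' * vpi s' - p s a s' * vstar s')|
          ≤ ∑ s', |p s a s' * vpi s' - p s a s' * vstar s'| :=
            Finset.abs_sum_le_sum_abs _ _
        _ = ∑ s', p s a s' * |vpi s' - vstar s'| := by
            refine Finset.sum_congr rfl fun s' _ => ?_
            rw [← mul_sub, abs_mul, abs_of_nonneg (hp0 s a s')]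
        _ ≤ ∑ s', p s a s' * M :=
            Finset.sum_le_sum fun s' _ =>
              mul_le_mul_of_nonneg_left (hMle s') (hp0 s a s')
        _ = M := by rw [← Finset.sum_mul, hp1 s a, one_mul]
    have key : ∀ s, |vpi s - vstar s| ≤ β * M := by
      intro s
      rw [hfix s, hstar s, abs_sub_le_iff]
      constructor
      · rw [sub_le_iff_le_add]
        apply Finset.sup'_le
        intro a _
        have h2 := (abs_le.mp (hsum s a)).2
        have h3 : r s a + β * ∑ s', p s a s' * vstar s' ≤
            Finset.univ.sup' Finset.univ_nonempty
              (fun a => r s a + β * ∑ s', p s a s' * vstar s') :=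
          Finset.le_sup' (fun a => r s a + β * ∑ s', p s a s' * vstar s')
            (Finset.mem_univ a)
        nlinarith
      · rw [sub_le_iff_le_add]
        apply Finset.sup'_le
        intro a _
        have h2 := (abs_le.mp (hsum s a)).1
        have h3 : r s a + β * ∑ s', p s a s' * vpi s' ≤
            Finset.univ.sup' Finset.univ_nonempty
              (fun a => r s a + β * ∑ s', p s a s' * vpi s') :=
          Finset.le_sup' (fun a => r s a + β * ∑ s', p s a s' * vpi s')
            (Finset.mem_univ a)
        nlinarith
    have hMβ : M ≤ β * M := by
      apply Finset.sup'_le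
      intro s _
      exact key s
    have hMzero : M = 0 := by nlinarith
    funext s
    have := hMle s
    rw [hMzero] at this
    have := abs_nonpos_iff.mp this
    linarith [sub_eq_zero.mp this]
end
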